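/- Under the partition into active and inactive constraints, if the KKT system has a solution (x_θ, λ̃_θ) with dual component satisfying G λ̃_θ = (C̃ A^{-1} B - D̃)θ - ẽ and λ̃_θ = G^+((C̃ A^{-1} B - D̃)θ - ẽ) + u with C̃^T u = 0, then the primal solution admits the affine representation x_θ = J_θ θ + A^{-1} C̃^T G^+ ẽ, where J_θ = A^{-1}B - A^{-1} C̃^T G^+ (C̃ A^{-1} B - D̃). -/
import Mathlib


open Matrix

theorem primal_affine_representation
    (n p a : ℕ)
    (A : Matrix (Fin n) (Fin n) ℝ) (B : Matrix (Fin n) (Fin p) ℝ)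
    (Ct : Matrix (Fin a) (Fin n) ℝ) (Dt : Matrix (Fin a) (Fin p) ℝ)
    (et : Fin a → ℝ) (Gp : Matrix (Fin a) (Fin a) ℝ)
    (θ : Fin p → ℝ) (u lam : Fin a → ℝ) (x : Fin n → ℝ)
    (hA : A.PosDef)
    -- Moore–Penrose axioms for Gp with respect to G = Ct * A⁻¹ * Ctᵀ
    (h1 : (Ct * A⁻¹ * Ctᵀ) * Gp * (Ct * A⁻¹ * Ctᵀ) = Ct * A⁻¹ * Ctᵀ)
    (h2 : Gp * (Ct * A⁻¹ * Ctᵀ) * Gp = Gp)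
    (h3 : ((Ct * A⁻¹ * Ctᵀ) * Gp)ᵀ = (Ct * A⁻¹ * Ctᵀ) * Gp)
    (h4 : (Gp * (Ct * A⁻¹ * Ctᵀ))ᵀ = Gp * (Ct * A⁻¹ * Ctᵀ))
    (hu : Ctᵀ.mulVec u = 0)
    (hlamsys : (Ct * A⁻¹ * Ctᵀ).mulVec lam = (Ct * A⁻¹ * B - Dt).mulVec θ - et)
    (hlam : lam = Gp.mulVec ((Ct * A⁻¹ * B - Dt).mulVec θ - et) + u)
    (hx : x = A⁻¹.mulVec (B.mulVec θ - Ctᵀ.mulVec lam)) :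
    x = (A⁻¹ * B - A⁻¹ * Ctᵀ * Gp * (Ct * A⁻¹ * B - Dt)).mulVec θ
        + (A⁻¹ * Ctᵀ * Gp).mulVec et := by
  subst hlam hx
  simp only [mulVec_add, mulVec_sub, sub_mulVec, ← mulVec_mulVec, hu, add_zero]
  abel
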